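/- arXiv:2310.09960 — 2 statements merged into one kernel-verified Lean document; each statement's English description precedes it below -/
import Mathlib

section
/- In the satellite conjunction model, as σ → 0 (or as θ₀ → ∞ with σ fixed), the point mass M(D) = 1 - Γ₂(D²/σ²; 0) converges in probability to 0. -/
open Set Filter Topology

/-- CDF of the noncentral chi-square distribution with 2 degrees of freedom and
noncentrality `ν`, evaluated at `x`. -/
noncomputable def Gamma2 (x ν : ℝ) : ℝ :=
  ∑' k : ℕ, Real.exp (-ν / 2) * (ν / 2) ^ k / (Nat.factorial k : ℝ) *
    (1 - Real.exp (-x / 2) *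
      ∑ j ∈ Finset.range (k + 1), (x / 2) ^ j / (Nat.factorial j : ℝ))

/-! `Γ₂(x; ν)` is the Poisson(`ν/2`) mixture of the tails `P(Poisson(x/2) ≥ k + 1)`. The
Chernoff-type bound `P(Poisson(a) ≥ n) ≤ e^a / 2^n`, summed against the Poisson weights, gives
`Γ₂(x; ν) ≤ e^(x/2 - ν/4) / 2`, which tends to `0` as the noncentrality `θ₀²/σ²` tends to `∞`. -/

open Finset Nat Real

/-- `poissonTail a n` is `P(N ≥ n)` for `N` Poisson with mean `a`. -/
noncomputable def poissonTail (a : ℝ) (n : ℕ) : ℝ :=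
  1 - exp (-a) * ∑ j ∈ range n, a ^ j / j !

theorem hasSum_pow_div_factorial (a : ℝ) : HasSum (fun n : ℕ => a ^ n / n !) (exp a) := by
  rw [Real.exp_eq_exp_ℝ]
  exact NormedSpace.expSeries_div_hasSum_exp a

theorem poissonTail_nonneg {a : ℝ} (ha : 0 ≤ a) (n : ℕ) : 0 ≤ poissonTail a n := by
  rw [poissonTail, sub_nonneg, exp_neg, inv_mul_le_iff₀ (exp_pos a), mul_one]
  exact sum_le_exp_of_nonneg ha n

theorem exp_sub_sum_range_le {a : ℝ} (ha : 0 ≤ a) (n : ℕ) :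
    exp a - ∑ j ∈ range n, a ^ j / j ! ≤ exp (2 * a) / 2 ^ n := by
  have hTail := (hasSum_nat_add_iff' n).mpr (hasSum_pow_div_factorial a)
  have hTail₂ := ((hasSum_nat_add_iff' n).mpr (hasSum_pow_div_factorial (2 * a))).div_const (2 ^ n)
  have hterm (j : ℕ) : a ^ (j + n) / (j + n)! ≤ (2 * a) ^ (j + n) / (j + n)! / 2 ^ n := by
    rw [le_div_iff₀ (by positivity), div_mul_eq_mul_div]
    gcongr
    calc a ^ (j + n) * 2 ^ n ≤ a ^ (j + n) * 2 ^ (j + n) := by gcongr <;> norm_num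
      _ = (2 * a) ^ (j + n) := by ring
  calc exp a - ∑ j ∈ range n, a ^ j / j !
      ≤ (exp (2 * a) - ∑ j ∈ range n, (2 * a) ^ j / j !) / 2 ^ n := hasSum_le hterm hTail hTail₂
    _ ≤ exp (2 * a) / 2 ^ n := by
      gcongr
      exact sub_le_self _ (sum_nonneg fun j _ => by positivity)

theorem poissonTail_le {a : ℝ} (ha : 0 ≤ a) (n : ℕ) : poissonTail a n ≤ exp a / 2 ^ n := by
  have h := mul_le_mul_of_nonneg_left (exp_sub_sum_range_le ha n) (exp_pos (-a)).le
  rwa [mul_sub, ← exp_add, neg_add_cancel, exp_zero, mul_div_assoc', ← exp_add, two_mul,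
    neg_add_cancel_left] at h

theorem Gamma2_eq_tsum (x ν : ℝ) :
    Gamma2 x ν = ∑' k : ℕ, exp (-(ν / 2)) * (ν / 2) ^ k / k ! * poissonTail (x / 2) (k + 1) := by
  simp only [Gamma2, poissonTail, neg_div]

theorem Gamma2_nonneg {x ν : ℝ} (hx : 0 ≤ x) (hν : 0 ≤ ν) : 0 ≤ Gamma2 x ν := by
  rw [Gamma2_eq_tsum]
  exact tsum_nonneg fun k => mul_nonneg (by positivity) (poissonTail_nonneg (by positivity) _)

theorem Gamma2_le_exp {x ν : ℝ} (hx : 0 ≤ x) (hν : 0 ≤ ν) :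
    Gamma2 x ν ≤ exp (x / 2 - ν / 4) / 2 := by
  let w (k : ℕ) : ℝ := exp (-(ν / 2)) * (ν / 2) ^ k / (k ! : ℝ)
  have hbound : HasSum (fun k => w k * (exp (x / 2) / 2 ^ (k + 1))) (exp (x / 2 - ν / 4) / 2) := by
    have hexp : exp (-(ν / 2)) * exp (x / 2) / 2 * exp (ν / 2 / 2) = exp (x / 2 - ν / 4) / 2 := by
      rw [div_mul_eq_mul_div, ← exp_add, ← exp_add]; ring_nf
    refine hexp ▸ ((hasSum_pow_div_factorial (ν / 2 / 2)).mul_left _).congr_fun fun k => ?_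
    simp only [w, div_pow, pow_succ]; field_simp
  have hterm (k : ℕ) : w k * poissonTail (x / 2) (k + 1) ≤ w k * (exp (x / 2) / 2 ^ (k + 1)) := by
    gcongr; exact poissonTail_le (by positivity) _
  have hnonneg (k : ℕ) : 0 ≤ w k * poissonTail (x / 2) (k + 1) :=
    mul_nonneg (by positivity) (poissonTail_nonneg (by positivity) _)
  rw [Gamma2_eq_tsum, ← hbound.tsum_eq]
  exact (Summable.of_nonneg_of_le hnonneg hterm hbound.summable).tsum_le_tsum hterm hbound.summable

theorem tendsto_Gamma2_atTop {x : ℝ} (hx : 0 ≤ x) : Tendsto (Gamma2 x) atTop (𝓝 0) := by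
  have hbound : Tendsto (fun ν => exp (x / 2 - ν / 4) / 2) atTop (𝓝 0) := by
    have hexponent : Tendsto (fun ν : ℝ => x / 2 - ν / 4) atTop atBot := by
      simp only [sub_eq_add_neg]
      exact tendsto_atBot_add_const_left _ _
        (tendsto_neg_atTop_atBot.comp (tendsto_id.atTop_div_const (by norm_num)))
    simpa using (tendsto_exp_atBot.comp hexponent).div_const 2
  exact tendsto_of_tendsto_of_tendsto_of_le_of_le' tendsto_const_nhds hbound
    (eventually_ge_atTop 0 |>.mono fun ν hν => Gamma2_nonneg hx hν)
    (eventually_ge_atTop 0 |>.mono fun ν hν => Gamma2_le_exp hx hν)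

theorem tendsto_const_div_sq_nhdsGT_zero {c : ℝ} (hc : 0 < c) :
    Tendsto (fun σ : ℝ => c / σ ^ 2) (𝓝[>] 0) atTop := by
  simp only [div_eq_mul_inv, ← inv_pow]
  exact ((tendsto_pow_atTop two_ne_zero).comp tendsto_inv_nhdsGT_zero).const_mul_atTop hc

/-- For `ε ∈ (0, 1)`, `M(D) = exp(-D²/(2σ²)) > ε` iff `D²/σ² < -2 log ε`, so
`P(M(D) > ε) = Γ₂(-2 log ε; θ₀²/σ²)`. -/
theorem point_mass_tendsto_zero_in_probability (θ₀ : ℝ) (hθ₀ : 0 < θ₀) :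
    ∀ ε ∈ Ioo (0 : ℝ) 1,
      Tendsto (fun σ : ℝ => Gamma2 (-2 * Real.log ε) (θ₀ ^ 2 / σ ^ 2))
        (𝓝[>] 0) (𝓝 0) := by
  rintro ε ⟨hε₀, hε₁⟩
  have hx : 0 ≤ -2 * log ε := by nlinarith [log_nonpos hε₀.le hε₁.le]
  exact (tendsto_Gamma2_atTop hx).comp (tendsto_const_div_sq_nhdsGT_zero (pow_pos hθ₀ 2))
end

section
/- In the two-dimensional Gaussian model, the marginal posterior of θ = ‖μ‖ under the uniform prior suffers probability dilution: for fixed d ≥ 0 and fixed θ > 0, G(θ; d) = Γ₂(θ²/σ²; d²/σ²) → 0 as σ → ∞. In particular the posterior probability of collision G([0,R]; d) → 0 as σ → ∞, for any fixed d and R. -/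
open Set Filter Topology

/-! `Γ₂(x; ν)` is a Poisson(`ν/2`) mixture of the central chi-square CDFs `Γ_{2+2k}(x; 0)`, each
of which lies in `[0, Γ₂(x; 0)] = [0, 1 - e^{-x/2}]`; hence so does the mixture, uniformly in `ν`.
As `x → 0` this bound tends to `0`. -/

open Nat in
theorem hasSum_exp_neg_mul_pow_div_factorial (r : ℝ) :
    HasSum (fun n : ℕ ↦ Real.exp (-r) * r ^ n / n !) 1 := by
  have h := (NormedSpace.expSeries_div_hasSum_exp r).mul_left (Real.exp (-r))
  rw [← Real.exp_eq_exp_ℝ, ← Real.exp_add, neg_add_cancel, Real.exp_zero] at h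
  simpa only [mul_div_assoc] using h

theorem tsum_mul_le_of_hasSum_one {ι : Type*} {p c : ι → ℝ} {b : ℝ} (hp : ∀ i, 0 ≤ p i)
    (hp_sum : HasSum p 1) (hc : ∀ i, 0 ≤ c i) (hcb : ∀ i, c i ≤ b) :
    ∑' i, p i * c i ≤ b := by
  have hbound : HasSum (fun i ↦ p i * b) b := by simpa using hp_sum.mul_right b
  have hle : ∀ i, p i * c i ≤ p i * b := fun i ↦ mul_le_mul_of_nonneg_left (hcb i) (hp i)
  exact hasSum_le hle (Summable.of_nonneg_of_le (fun i ↦ mul_nonneg (hp i) (hc i)) hle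
    hbound.summable).hasSum hbound

open Nat in
theorem exp_neg_mul_sum_pow_div_factorial_le_one {y : ℝ} (hy : 0 ≤ y) (n : ℕ) :
    Real.exp (-y) * ∑ j ∈ Finset.range n, y ^ j / j ! ≤ 1 := by
  calc Real.exp (-y) * ∑ j ∈ Finset.range n, y ^ j / j !
      ≤ Real.exp (-y) * Real.exp y := by gcongr; exact Real.sum_le_exp_of_nonneg hy n
    _ = 1 := by rw [← Real.exp_add, neg_add_cancel, Real.exp_zero]

open Nat in
theorem exp_neg_le_exp_neg_mul_sum_pow_div_factorial {y : ℝ} (hy : 0 ≤ y) {n : ℕ} (hn : n ≠ 0) :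
    Real.exp (-y) ≤ Real.exp (-y) * ∑ j ∈ Finset.range n, y ^ j / j ! := by
  have h0 : 0 ∈ Finset.range n := Finset.mem_range.2 (Nat.pos_of_ne_zero hn)
  have hone : 1 ≤ ∑ j ∈ Finset.range n, y ^ j / j ! := by
    simpa using Finset.single_le_sum (f := fun j ↦ y ^ j / j !) (fun j _ ↦ by positivity) h0
  exact le_mul_of_one_le_right (Real.exp_nonneg _) hone

theorem Gamma2_mem_Icc {x ν : ℝ} (hx : 0 ≤ x) (hν : 0 ≤ ν) :
    Gamma2 x ν ∈ Icc 0 (1 - Real.exp (-x / 2)) := by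
  have hp : HasSum (fun k : ℕ ↦ Real.exp (-ν / 2) * (ν / 2) ^ k / (Nat.factorial k : ℝ)) 1 := by
    simpa only [neg_div] using hasSum_exp_neg_mul_pow_div_factorial (ν / 2)
  have hc_nonneg (k : ℕ) : 0 ≤ 1 - Real.exp (-x / 2) *
      ∑ j ∈ Finset.range (k + 1), (x / 2) ^ j / (Nat.factorial j : ℝ) := by
    rw [neg_div]
    linarith [exp_neg_mul_sum_pow_div_factorial_le_one (by positivity : 0 ≤ x / 2) (k + 1)]
  have hc_le (k : ℕ) : 1 - Real.exp (-x / 2) *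
      ∑ j ∈ Finset.range (k + 1), (x / 2) ^ j / (Nat.factorial j : ℝ) ≤ 1 - Real.exp (-x / 2) := by
    rw [neg_div]
    linarith [exp_neg_le_exp_neg_mul_sum_pow_div_factorial (by positivity : 0 ≤ x / 2) k.succ_ne_zero]
  exact ⟨tsum_nonneg fun k ↦ mul_nonneg (by positivity) (hc_nonneg k),
    tsum_mul_le_of_hasSum_one (fun k ↦ by positivity) hp hc_nonneg hc_le⟩

theorem tendsto_Gamma2_zero {α : Type*} {l : Filter α} {x ν : α → ℝ} (hx_nonneg : ∀ a, 0 ≤ x a)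
    (hν : ∀ a, 0 ≤ ν a) (hx : Tendsto x l (𝓝 0)) :
    Tendsto (fun a ↦ Gamma2 (x a) (ν a)) l (𝓝 0) := by
  have hbound : Tendsto (fun a ↦ 1 - Real.exp (-x a / 2)) l (𝓝 0) := by
    have hcont : Continuous fun t : ℝ ↦ 1 - Real.exp (-t / 2) := by fun_prop
    simpa [Function.comp_def] using (hcont.tendsto 0).comp hx
  exact squeeze_zero (fun a ↦ (Gamma2_mem_Icc (hx_nonneg a) (hν a)).1)
    (fun a ↦ (Gamma2_mem_Icc (hx_nonneg a) (hν a)).2) hbound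

theorem uniform_prior_probability_dilution_general (d : ℝ) (θ : ℝ) :
    Tendsto (fun σ : ℝ => Gamma2 (θ ^ 2 / σ ^ 2) (d ^ 2 / σ ^ 2))
      atTop (𝓝 0) :=
  tendsto_Gamma2_zero (fun σ ↦ by positivity) (fun σ ↦ by positivity)
    (tendsto_const_nhds.div_atTop (tendsto_pow_atTop two_ne_zero))

/-- Probability dilution of the uniform-prior marginal posterior: for fixed
`d ≥ 0` and fixed `θ > 0`, `G(θ; d) = Γ₂(θ²/σ²; d²/σ²) → 0` as `σ → ∞`.
In particular the posterior probability of collision `G([0,R]; d) → 0` as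
`σ → ∞`, for any fixed `d` and `R > 0`. -/
theorem uniform_prior_probability_dilution (d : ℝ) (hd : 0 ≤ d) (θ : ℝ) (hθ : 0 < θ) :
    Tendsto (fun σ : ℝ => Gamma2 (θ ^ 2 / σ ^ 2) (d ^ 2 / σ ^ 2))
      atTop (𝓝 0) :=
  uniform_prior_probability_dilution_general d θ
end
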